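/- The magneto-spectral height of the complete graph K_d (d ≥ 2) equals d − 2, i.e., ν(K_d) = d − 2, and the supremum is attained by the anti-balanced signature σ̄ ≡ −1. -/

import Mathlib

open Finset

variable {V : Type*} [Fintype V] {W : Type*} [Fintype W]

open scoped Classical in
noncomputable def magEnergy (G : SimpleGraph V) (σ : V → V → ℂ) (f : V → ℂ) : ℝ :=
  (1/2) * ∑ x : V, ∑ y : V, if G.Adj x y then ‖f x - σ x y * f y‖ ^ 2 else 0

noncomputable def magDenom (f : V → ℂ) : ℝ := ∑ x : V, ‖f x‖ ^ 2

noncomputable def lambda1 (G : SimpleGraph V) (σ : V → V → ℂ) : ℝ :=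
  sInf { r : ℝ | ∃ f : V → ℂ, f ≠ 0 ∧ r = magEnergy G σ f / magDenom f }

def IsMagPotential (G : SimpleGraph V) (σ : V → V → ℂ) : Prop :=
  (∀ x y, G.Adj x y → ‖σ x y‖ = 1) ∧
  (∀ x y, G.Adj x y → σ y x = (σ x y)⁻¹)

noncomputable def magHeight (G : SimpleGraph V) : ℝ :=
  sSup { r : ℝ | ∃ σ : V → V → ℂ, IsMagPotential G σ ∧ r = lambda1 G σ }

open scoped Classical in
noncomputable def magLap (G : SimpleGraph V) (σ : V → V → ℂ) (f : V → ℂ) : V → ℂ :=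
  fun x => ∑ y : V, if G.Adj x y then f x - σ x y * f y else 0

/-!
On `K_n` with `|σ| = 1`, the energy is `(n - 1)‖f‖² - Re ∑_{x ≠ y} f(x) conj (σ(x,y) f(y))`.
For `σ ≡ -1` this is `(n - 2)‖f‖² + |∑ f|² ≥ (n - 2)‖f‖²`. For an arbitrary potential `σ`, the
test function `f = σ(u,v) δ_u + δ_v` makes the edge `uv` carry no energy, so only the `2(n - 2)`
oriented edges between `{u, v}` and its complement contribute, and the Rayleigh quotient is `n - 2`.
-/

lemma magDenom_pos {f : V → ℂ} (hf : f ≠ 0) : 0 < magDenom f := by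
  obtain ⟨x, hx⟩ := Function.ne_iff.mp hf
  exact Finset.sum_pos' (fun y _ => by positivity)
    ⟨x, Finset.mem_univ x, pow_pos (norm_pos_iff.mpr hx) 2⟩

lemma isMagPotential_neg_one {U : Type*} (G : SimpleGraph U) :
    IsMagPotential G (fun _ _ => -1) :=
  ⟨fun _ _ _ => by simp, fun _ _ _ => by norm_num⟩

lemma magEnergy_nonneg (G : SimpleGraph V) (σ : V → V → ℂ) (f : V → ℂ) :
    0 ≤ magEnergy G σ f := by
  unfold magEnergy
  refine mul_nonneg (by norm_num) (Finset.sum_nonneg fun x _ => Finset.sum_nonneg fun y _ => ?_)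
  split_ifs <;> positivity

lemma lambda1_le_div (G : SimpleGraph V) (σ : V → V → ℂ) {f : V → ℂ} (hf : f ≠ 0) :
    lambda1 G σ ≤ magEnergy G σ f / magDenom f := by
  refine csInf_le ⟨0, ?_⟩ ⟨f, hf, rfl⟩
  rintro r ⟨g, hg, rfl⟩
  exact div_nonneg (magEnergy_nonneg G σ g) (magDenom_pos hg).le

lemma le_lambda1 [Nonempty V] (G : SimpleGraph V) (σ : V → V → ℂ) {c : ℝ}
    (h : ∀ f : V → ℂ, f ≠ 0 → c * magDenom f ≤ magEnergy G σ f) : c ≤ lambda1 G σ := by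
  refine le_csInf ⟨_, 1, one_ne_zero, rfl⟩ ?_
  rintro r ⟨f, hf, rfl⟩
  exact (le_div_iff₀ (magDenom_pos hf)).mpr (h f hf)

lemma sum_sum_ite_eq_sub_sum_diag {M : Type*} [AddCommGroup M] [DecidableEq V] (g : V → V → M) :
    ∑ x, ∑ y, (if x = y then 0 else g x y) = ∑ x, ∑ y, g x y - ∑ x, g x x := by
  have h : ∀ x y, (if x = y then 0 else g x y) = g x y - if x = y then g x y else 0 := by
    intro x y; split_ifs <;> simp_all
  simp only [h, Finset.sum_sub_distrib, Finset.sum_ite_eq, Finset.mem_univ, if_true]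

open ComplexConjugate

lemma magEnergy_top [DecidableEq V] {σ : V → V → ℂ} (hσ : ∀ x y, x ≠ y → ‖σ x y‖ = 1)
    (f : V → ℂ) :
    magEnergy (⊤ : SimpleGraph V) σ f = ((Fintype.card V : ℝ) - 1) * magDenom f
      - ∑ x, ∑ y, (if x = y then 0 else (f x * conj (σ x y * f y)).re) := by
  calc magEnergy (⊤ : SimpleGraph V) σ f
      = 1 / 2 * ∑ x, ∑ y, ((if x = y then 0 else ‖f x‖ ^ 2) + (if x = y then 0 else ‖f y‖ ^ 2)
          - 2 * (if x = y then 0 else (f x * conj (σ x y * f y)).re)) := by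
        unfold magEnergy
        congr 1
        refine Finset.sum_congr rfl fun x _ => Finset.sum_congr rfl fun y _ => ?_
        by_cases hxy : x = y
        · simp [hxy]
        · rw [if_pos (show (⊤ : SimpleGraph V).Adj x y from hxy), if_neg hxy, if_neg hxy,
            if_neg hxy]
          simp only [Complex.sq_norm, Complex.normSq_sub, Complex.normSq_mul]
          rw [← Complex.sq_norm (σ x y), hσ x y hxy]
          ring
    _ = _ := by
        simp only [Finset.sum_add_distrib, Finset.sum_sub_distrib, ← Finset.mul_sum,
          sum_sum_ite_eq_sub_sum_diag (fun x y => ‖f x‖ ^ 2),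
          sum_sum_ite_eq_sub_sum_diag (fun x y => ‖f y‖ ^ 2)]
        rw [Finset.sum_comm (f := fun x y => ‖f y‖ ^ 2)]
        simp only [Finset.sum_const, Finset.card_univ, nsmul_eq_mul, magDenom, ← Finset.mul_sum]
        ring

lemma magEnergy_top_neg_one (f : V → ℂ) :
    magEnergy (⊤ : SimpleGraph V) (fun _ _ => -1) f
      = ((Fintype.card V : ℝ) - 2) * magDenom f + ‖∑ x, f x‖ ^ 2 := by
  classical
  have hsq : ‖∑ x, f x‖ ^ 2 = ∑ x, ∑ y, (f x * conj (f y)).re := by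
    rw [Complex.sq_norm, ← Complex.ofReal_re (Complex.normSq _), ← Complex.mul_conj, map_sum,
      Finset.sum_mul_sum, Complex.re_sum]
    simp only [Complex.re_sum]
  have hdiag : ∑ x, (f x * conj (f x)).re = magDenom f := by
    simp only [Complex.mul_conj, Complex.ofReal_re, magDenom, Complex.sq_norm]
  rw [magEnergy_top (fun _ _ _ => by simp), hsq]
  simp only [neg_one_mul, map_neg, mul_neg, Complex.neg_re, sum_sum_ite_eq_sub_sum_diag,
    Finset.sum_neg_distrib, hdiag]
  ring

lemma lambda1_top_le [Nontrivial V] {σ : V → V → ℂ} (hσ : IsMagPotential (⊤ : SimpleGraph V) σ) :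
    lambda1 (⊤ : SimpleGraph V) σ ≤ (Fintype.card V : ℝ) - 2 := by
  classical
  obtain ⟨u, v, huv⟩ := exists_pair_ne V
  have hnorm : ∀ x y, x ≠ y → ‖σ x y‖ = 1 := hσ.1
  have hinv : σ v u * σ u v = 1 := by
    rw [hσ.2 u v huv, inv_mul_cancel₀ (norm_ne_zero_iff.mp (by simp [hnorm u v huv]))]
  set f : V → ℂ := fun x => if x = u then σ u v else if x = v then 1 else 0 with hf
  have hf0 : ∀ x, x ≠ u ∧ x ≠ v → f x = 0 := fun x hx => by simp [hf, hx.1, hx.2]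
  have hfv : f v = 1 := by simp [hf, huv.symm]
  have hD : magDenom f = 2 := by
    rw [magDenom, Fintype.sum_eq_add u v huv (fun x hx => by simp [hf0 x hx])]
    norm_num [hf, huv.symm, hnorm u v huv]
  have hcross : ∑ x, ∑ y, (if x = y then 0 else (f x * conj (σ x y * f y)).re) = 2 := by
    rw [Fintype.sum_eq_add u v huv (fun x hx => by simp [hf0 x hx])]
    rw [Fintype.sum_eq_add u v huv (fun y hy => by simp [hf0 y hy]),
      Fintype.sum_eq_add u v huv (fun y hy => by simp [hf0 y hy])]
    norm_num [hf, huv, huv.symm, hinv, Complex.mul_conj, Complex.normSq_eq_norm_sq, hnorm u v huv]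
  have hfne : f ≠ 0 := fun h => one_ne_zero (hfv.symm.trans (congrFun h v))
  calc lambda1 (⊤ : SimpleGraph V) σ ≤ magEnergy ⊤ σ f / magDenom f := lambda1_le_div _ _ hfne
    _ = (Fintype.card V : ℝ) - 2 := by
      rw [magEnergy_top hnorm, hcross, hD]; ring

lemma lambda1_top_neg_one [Nontrivial V] :
    lambda1 (⊤ : SimpleGraph V) (fun _ _ => -1) = (Fintype.card V : ℝ) - 2 := by
  refine le_antisymm (lambda1_top_le (isMagPotential_neg_one _))
    (le_lambda1 _ _ fun f _ => ?_)
  rw [magEnergy_top_neg_one]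
  exact le_add_of_nonneg_right (by positivity)

lemma magHeight_top [Nontrivial V] : magHeight (⊤ : SimpleGraph V) = (Fintype.card V : ℝ) - 2 :=
  IsGreatest.csSup_eq
    ⟨⟨_, isMagPotential_neg_one _, lambda1_top_neg_one.symm⟩,
      fun _ ⟨_, hσ, hr⟩ => hr ▸ lambda1_top_le hσ⟩

theorem magHeight_complete (d : ℕ) (hd : 2 ≤ d) :
    magHeight (⊤ : SimpleGraph (Fin d)) = (d : ℝ) - 2 ∧
    lambda1 (⊤ : SimpleGraph (Fin d)) (fun _ _ => -1) = (d : ℝ) - 2 := by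
  have : Nontrivial (Fin d) := Fin.nontrivial_iff_two_le.mpr hd
  simpa only [Fintype.card_fin] using
    And.intro (magHeight_top (V := Fin d)) (lambda1_top_neg_one (V := Fin d))
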